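/- arXiv:2206.14906 — 3 statements merged into one kernel-verified Lean document; each statement's English description precedes it below -/
import Mathlib

section
/- Let d_1, ..., d_T be nonnegative integers (delays) with t + d_t ≤ T for all t. For each round s define A_s = {r ≤ s : r + d_r = s}, a_s = |A_s|, and σ_t = ∑_{s=1}^{t−1} 1[s + d_s ≥ t]. Then for every t, ∑_{s=1}^{t} σ_s ≥ ∑_{s=1}^{t} a_s(a_s − 1)/2. -/
/-!
The observations arriving at round `s` come from distinct rounds `r = s - d r`, so their delays
are distinct and add up to at least `0 + 1 + ⋯ + (a_s - 1) = a_s.choose 2`. Summed over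
`s ≤ t`, this is the total delay of the rounds whose observation has arrived by `t`; each such
round `r` is outstanding at the `d r` rounds `r + 1, …, r + d r ≤ t`, so that total is at most
`σ_1 + ⋯ + σ_t`.
-/

open Finset

theorem choose_card_two_le_sum (S : Finset ℕ) : (#S).choose 2 ≤ ∑ x ∈ S, x := by
  have h := sum_range_le_sum (s := S.map Nat.castEmbedding) (c := (0 : ℤ)) (by simp)
  rw [card_map, sum_map] at h
  rw [Nat.choose_two_right, ← sum_range_id]
  zify
  simpa using h

theorem choose_card_two_le_sum_of_injOn {ι : Type*} {A : Finset ι} {f : ι → ℕ}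
    (hf : Set.InjOn f A) : (#A).choose 2 ≤ ∑ r ∈ A, f r := by
  simpa [card_image_of_injOn hf, sum_image hf] using choose_card_two_le_sum (A.image f)

def arrivals (d : ℕ → ℕ) (s : ℕ) : Finset ℕ := {r ∈ Icc 1 s | r + d r = s}

def outstanding (d : ℕ → ℕ) (t : ℕ) : Finset ℕ := {s ∈ Icc 1 (t - 1) | t ≤ s + d s}

theorem injOn_arrivals (d : ℕ → ℕ) (s : ℕ) : Set.InjOn d (arrivals d s) := by
  intro r₁ h₁ r₂ h₂ hd
  simp only [arrivals, mem_coe, mem_filter] at h₁ h₂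
  omega

theorem sum_sum_arrivals (d : ℕ → ℕ) (t : ℕ) :
    ∑ s ∈ Icc 1 t, ∑ r ∈ arrivals d s, d r = ∑ r ∈ Icc 1 t with r + d r ≤ t, d r := by
  rw [sum_comm' (s' := fun r => {r + d r}) (t' := {r ∈ Icc 1 t | r + d r ≤ t})]
  · simp
  · intro s r
    simp only [arrivals, mem_filter, mem_Icc, mem_singleton]
    omega

theorem sum_card_outstanding (d : ℕ → ℕ) (t : ℕ) :
    ∑ s ∈ Icc 1 t, #(outstanding d s) = ∑ r ∈ Icc 1 t, (min t (r + d r) - r) := by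
  simp_rw [card_eq_sum_ones]
  rw [sum_comm' (s' := fun r => Ioc r (min t (r + d r))) (t' := Icc 1 t)]
  · simp
  · intro s r
    simp only [outstanding, mem_filter, mem_Icc, mem_Ioc]
    omega

theorem sum_sum_arrivals_le_sum_card_outstanding (d : ℕ → ℕ) (t : ℕ) :
    ∑ s ∈ Icc 1 t, ∑ r ∈ arrivals d s, d r ≤ ∑ s ∈ Icc 1 t, #(outstanding d s) := by
  rw [sum_sum_arrivals, sum_card_outstanding]
  calc ∑ r ∈ Icc 1 t with r + d r ≤ t, d r
      ≤ ∑ r ∈ Icc 1 t with r + d r ≤ t, (min t (r + d r) - r) :=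
        sum_le_sum fun r hr => by simp only [mem_filter] at hr; omega
    _ ≤ ∑ r ∈ Icc 1 t, (min t (r + d r) - r) := sum_le_sum_of_subset (filter_subset _ _)

theorem outstanding_ge_arrivals_general (T : ℕ) (d : ℕ → ℕ)
    (a : ℕ → ℕ) (ha : ∀ s, a s = ((Finset.Icc 1 s).filter (fun r => r + d r = s)).card)
    (σ : ℕ → ℕ) (hσ : ∀ t, σ t = ((Finset.Icc 1 (t - 1)).filter (fun s => t ≤ s + d s)).card) :
    ∀ t ∈ Finset.Icc 1 T,
      ∑ s ∈ Finset.Icc 1 t, ((a s : ℝ) * ((a s : ℝ) - 1)) / 2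
        ≤ ∑ s ∈ Finset.Icc 1 t, (σ s : ℝ) := by
  intro t _
  have ha' : ∀ s, a s = #(arrivals d s) := ha
  have hσ' : ∀ s, σ s = #(outstanding d s) := hσ
  have key : ∑ s ∈ Icc 1 t, (a s).choose 2 ≤ ∑ s ∈ Icc 1 t, σ s :=
    calc ∑ s ∈ Icc 1 t, (a s).choose 2
        ≤ ∑ s ∈ Icc 1 t, ∑ r ∈ arrivals d s, d r := sum_le_sum fun s _ => by
          rw [ha']; exact choose_card_two_le_sum_of_injOn (injOn_arrivals d s)
      _ ≤ ∑ s ∈ Icc 1 t, σ s := by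
          simpa only [hσ'] using sum_sum_arrivals_le_sum_card_outstanding d t
  simp_rw [← Nat.cast_choose_two]
  exact_mod_cast key

theorem outstanding_ge_arrivals (T : ℕ) (d : ℕ → ℕ)
    (hd : ∀ t ∈ Finset.Icc 1 T, t + d t ≤ T)
    (a : ℕ → ℕ) (ha : ∀ s, a s = ((Finset.Icc 1 s).filter (fun r => r + d r = s)).card)
    (σ : ℕ → ℕ) (hσ : ∀ t, σ t = ((Finset.Icc 1 (t - 1)).filter (fun s => t ≤ s + d s)).card) :
    ∀ t ∈ Finset.Icc 1 T,
      ∑ s ∈ Finset.Icc 1 t, ((a s : ℝ) * ((a s : ℝ) - 1)) / 2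
        ≤ ∑ s ∈ Finset.Icc 1 t, (σ s : ℝ) :=
  outstanding_ge_arrivals_general T d a ha σ hσ
end

section
/- Let d_1, ..., d_T be nonnegative delays and define σ_t = ∑_{s=1}^{t−1} 1[s + d_s ≥ t] and σ_max = max_t σ_t. Then for every subset S ⊆ {1,...,T}, σ_max ≤ |S| + max_{s ∉ S} d_s. Consequently σ_max ≤ min_{S ⊆ {1,...,T}} (|S| + max_{s ∉ S} d_s). -/
theorem sigma_max_bound (T : ℕ) (d : ℕ → ℕ)
    (σ : ℕ → ℕ) (hσ : ∀ t, σ t = ((Finset.Icc 1 (t - 1)).filter (fun s => t ≤ s + d s)).card) :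
    (∀ S ⊆ Finset.Icc 1 T,
        (Finset.Icc 1 T).sup σ ≤ S.card + ((Finset.Icc 1 T) \ S).sup d) ∧
    (Finset.Icc 1 T).sup σ ≤
      (Finset.Icc 1 T).powerset.inf' (Finset.powerset_nonempty _)
        (fun S => S.card + ((Finset.Icc 1 T) \ S).sup d) := by
  have key : ∀ S ⊆ Finset.Icc 1 T,
      (Finset.Icc 1 T).sup σ ≤ S.card + ((Finset.Icc 1 T) \ S).sup d := by
    intro S hS
    apply Finset.sup_le
    intro t ht
    rw [hσ]
    set D := ((Finset.Icc 1 T) \ S).sup d with hD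
    set F := (Finset.Icc 1 (t-1)).filter (fun s => t ≤ s + d s) with hF
    have h1 : F.card = (F ∩ S).card + (F \ S).card :=
      (Finset.card_inter_add_card_sdiff F S).symm
    have h2 : (F ∩ S).card ≤ S.card := Finset.card_le_card Finset.inter_subset_right
    have htT := Finset.mem_Icc.mp ht
    have h3 : (F \ S) ⊆ Finset.Icc (t - D) (t - 1) := by
      intro s hs
      obtain ⟨hsF, hsS⟩ := Finset.mem_sdiff.mp hs
      obtain ⟨hs1, hs2⟩ := Finset.mem_filter.mp hsF
      rw [Finset.mem_Icc] at hs1 ⊢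
      have hsT : s ∈ Finset.Icc 1 T \ S := by
        rw [Finset.mem_sdiff, Finset.mem_Icc]
        exact ⟨⟨hs1.1, le_trans hs1.2 (le_trans (Nat.sub_le t 1) htT.2)⟩, hsS⟩
      have hdD : d s ≤ D := Finset.le_sup hsT
      constructor
      · omega
      · exact hs1.2
    have h4 : (F \ S).card ≤ D := by
      calc (F \ S).card ≤ (Finset.Icc (t - D) (t-1)).card := Finset.card_le_card h3
        _ = t - 1 + 1 - (t - D) := Nat.card_Icc _ _
        _ ≤ D := by omega
    calc F.card = (F ∩ S).card + (F \ S).card := h1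
      _ ≤ S.card + D := Nat.add_le_add h2 h4
  refine ⟨key, ?_⟩
  apply Finset.le_inf'
  intro S hS
  exact key S (Finset.mem_powerset.mp hS)
end

section
/- Let f(x) = −2η^{-1}√x + γ^{-1} x(log x − 1) for x > 0 with η, γ > 0. Then the function x ↦ 1/f''(x) = ( (η^{-1}/2) x^{-3/2} + γ^{-1} x^{-1} )^{-1} is convex on (0, ∞). -/
/-!
Writing `a = η⁻¹ / 2` and `b = γ⁻¹`, the function is `x ↦ x ^ 2 / (a √x + b x)`: a square
divided by a positive concave function. Such a quotient is convex, because the denominator only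
grows under averaging and Sedrakyan's inequality `(p + q)² / (u + v) ≤ p² / u + q² / v` handles
the numerator.
-/

open Set

section SqDivConcave

variable {𝕜 : Type*} [Field 𝕜] [LinearOrder 𝕜] [IsStrictOrderedRing 𝕜]

theorem add_sq_div_add_le {u v : 𝕜} (hu : 0 < u) (hv : 0 < v) (p q : 𝕜) :
    (p + q) ^ 2 / (u + v) ≤ p ^ 2 / u + q ^ 2 / v := by
  simpa using Finset.sq_sum_div_le_sum_sq_div Finset.univ ![p, q] (g := ![u, v])
    (by simp [Fin.forall_fin_two, hu, hv])

theorem ConcaveOn.convexOn_sq_div {s : Set 𝕜} {g : 𝕜 → 𝕜} (hg : ConcaveOn 𝕜 s g)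
    (hg_pos : ∀ x ∈ s, 0 < g x) : ConvexOn 𝕜 s (fun x => x ^ 2 / g x) := by
  refine convexOn_iff_forall_pos.2 ⟨hg.1, fun x hx y hy a b ha hb hab => ?_⟩
  have hgx := hg_pos x hx
  have hgy := hg_pos y hy
  simp only [smul_eq_mul]
  calc (a * x + b * y) ^ 2 / g (a * x + b * y)
      ≤ (a * x + b * y) ^ 2 / (a * g x + b * g y) :=
        div_le_div_of_nonneg_left (sq_nonneg _) (by positivity) (hg.2 hx hy ha.le hb.le hab)
    _ ≤ (a * x) ^ 2 / (a * g x) + (b * y) ^ 2 / (b * g y) :=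
        add_sq_div_add_le (by positivity) (by positivity) _ _
    _ = a * (x ^ 2 / g x) + b * (y ^ 2 / g y) := by
        field_simp

end SqDivConcave

theorem Real.concaveOn_mul_sqrt_add_mul {a b : ℝ} (ha : 0 ≤ a) (hb : 0 ≤ b) :
    ConcaveOn ℝ (Ici 0) (fun x => a * √x + b * x) :=
  (Real.strictConcaveOn_sqrt.concaveOn.smul ha).add ((concaveOn_id (convex_Ici 0)).smul hb)

theorem Real.rpow_neg_three_halves {x : ℝ} (hx : 0 < x) : x ^ (-(3:ℝ)/2) = √x / x ^ 2 := by
  rw [Real.sqrt_eq_rpow, show -(3:ℝ)/2 = 1/2 - (2:ℕ) by norm_num, Real.rpow_sub hx,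
    Real.rpow_natCast]

theorem inv_second_deriv_convex (η γ : ℝ) (hη : 0 < η) (hγ : 0 < γ) :
    ConvexOn ℝ (Set.Ioi (0:ℝ))
      (fun x : ℝ => (η⁻¹ / 2 * x ^ (-(3:ℝ)/2) + γ⁻¹ * x⁻¹)⁻¹) := by
  have hconcave : ConcaveOn ℝ (Ioi 0) (fun x => η⁻¹ / 2 * √x + γ⁻¹ * x) :=
    (Real.concaveOn_mul_sqrt_add_mul (by positivity) (by positivity)).subset Ioi_subset_Ici_self
      (convex_Ioi 0)
  refine (hconcave.convexOn_sq_div fun x (hx : 0 < x) => by positivity).congr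
    fun x (hx : 0 < x) => ?_
  rw [Real.rpow_neg_three_halves hx]
  field_simp
end
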